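/- Every full subcategory of a free category F_Q on a quiver Q is itself a free category: it is isomorphic to the free category on the quiver R whose vertices are the objects of the subcategory and whose arrows are the primitive paths (paths all of whose intermediate vertices lie outside the subcategory's object set). -/
import Mathlib


/-!
STATEMENT 17: Every full subcategory of the free category on a quiver `Q` is free:
it is isomorphic to the free category on the quiver `R` whose vertices are the chosen
objects `C₀` and whose arrows are the `C₀`-primitive paths (paths of positive length
all of whose intermediate vertices lie outside `C₀`).  The isomorphism sends a path
of primitive paths to its concatenation; bijectivity on morphism sets states that
every path between objects of `C₀` factors *uniquely* as a concatenation of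
primitive paths.
-/

open Quiver

section

variable {Q : Type} [Quiver.{1} Q]

/-- A `C₀`-primitive path: positive length, and no intermediate vertex lies in `C₀`. -/
def IsPrimitive (C0 : Set Q) {x y : Q} (w : Path x y) : Prop :=
  0 < w.length ∧ ∀ (z : Q) (p : Path x z) (q : Path z y),
    w = p.comp q → 0 < p.length → 0 < q.length → z ∉ C0

/-- The quiver `R` on `C₀` whose arrows are the primitive paths. -/
instance primQuiver (C0 : Set Q) : Quiver.{1} ↥C0 :=
  ⟨fun a b => {w : Path (a : Q) (b : Q) // IsPrimitive C0 w}⟩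

/-- The concatenation functor: a path of primitive paths composes to a path in `Q`. -/
def composePrim {C0 : Set Q} : ∀ {a b : ↥C0}, Path a b → Path (a : Q) (b : Q)
  | _, _, .nil => Path.nil
  | _, _, .cons p e => (composePrim p).comp e.1

end

section
variable {Q : Type} [Quiver.{1} Q]

@[simp] lemma composePrim_nil {C0 : Set Q} {a : ↥C0} :
    composePrim (.nil : Path a a) = .nil := by simp [composePrim]

@[simp] lemma composePrim_cons {C0 : Set Q} {a b c : ↥C0} (p : Path a b) (e : b ⟶ c) :
    composePrim (p.cons e) = (composePrim p).comp e.1 := by simp [composePrim]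

lemma comp_eq_comp_split {x y : Q} :
    ∀ {z z' : Q} (u : Path z y) (v : Path z' y) (s : Path x z) (t : Path x z'),
      s.comp u = t.comp v → u.length ≤ v.length →
      ∃ m : Path z' z, v = m.comp u ∧ s = t.comp m := by
  intro z z' u
  induction u with
  | nil =>
    intro v s t h _
    exact ⟨v, by simp, by simpa using h⟩
  | cons u' e ih =>
    intro v s t h hlen
    cases v with
    | nil => simp at hlen
    | cons v' f =>
      rw [Path.comp_cons, Path.comp_cons] at h
      obtain rfl := Path.obj_eq_of_cons_eq_cons h
      have h1 : s.comp u' = t.comp v' := eq_of_heq (Path.heq_of_cons_eq_cons h)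
      have h2 : e = f := eq_of_heq (Path.hom_heq_of_cons_eq_cons h)
      obtain ⟨m, hm1, hm2⟩ := ih v' s t h1 (by simpa using hlen)
      exact ⟨m, by rw [Path.comp_cons, ← hm1, h2], hm2⟩

def NoInt (C0 : Set Q) {z y : Q} (r : Path z y) : Prop :=
  ∀ (u : Q) (s : Path z u) (t : Path u y), r = s.comp t → 0 < s.length → 0 < t.length → u ∉ C0

lemma exists_state {C0 : Set Q} (a : ↥C0) : ∀ {y : Q} (w : Path (a : Q) y),
    ∃ (z : ↥C0) (p : Path a z) (r : Path (z : Q) y),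
      (composePrim p).comp r = w ∧ NoInt C0 r := by
  intro y w
  induction w with
  | nil =>
    exact ⟨a, .nil, .nil, by simp, fun u s t h hs ht _ => by
      have := congrArg Path.length h; simp at this; omega⟩
  | @cons c y w' e ih =>
    obtain ⟨z, p, r, hpr, hint⟩ := ih
    by_cases hc : c ∈ C0
    · rcases Nat.eq_zero_or_pos r.length with h0 | hpos
      · have hz : z = ⟨c, hc⟩ := Subtype.ext (Path.eq_of_length_zero r h0)
        subst hz
        have hr : r = .nil := Path.eq_nil_of_length_zero r h0
        subst hr
        refine ⟨⟨c, hc⟩, p, Path.nil.cons e, ?_, ?_⟩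
        · simp only [Path.comp_cons, Path.comp_nil]
          rw [show (composePrim p).comp Path.nil = composePrim p from rfl] at hpr
          rw [hpr]
        · intro u s t h hs ht _
          have := congrArg Path.length h; simp at this; omega
      · refine ⟨⟨c, hc⟩, p.cons ⟨r, hpos, hint⟩, Path.nil.cons e, ?_, ?_⟩
        · simp only [composePrim_cons, Path.comp_cons, Path.comp_nil, hpr]
        · intro u s t h hs ht _
          have := congrArg Path.length h; simp at this; omega
    · refine ⟨z, p, r.cons e, by rw [← hpr]; rfl, ?_⟩
      intro u s t h hs ht
      cases t with
      | nil => simp at ht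
      | cons t' f =>
        rw [Path.comp_cons] at h
        obtain rfl := Path.obj_eq_of_cons_eq_cons h
        have h1 : r = s.comp t' := eq_of_heq (Path.heq_of_cons_eq_cons h)
        rcases Nat.eq_zero_or_pos t'.length with ht0 | ht'
        · have : u = c := Path.eq_of_length_zero t' ht0
          subst this; exact hc
        · exact hint u s t' h1 hs ht'

lemma composePrim_surj {C0 : Set Q} (a b : ↥C0) (w : Path (a : Q) (b : Q)) :
    ∃ p : Path a b, composePrim p = w := by
  obtain ⟨z, p, r, hpr, hint⟩ := exists_state a w
  rcases Nat.eq_zero_or_pos r.length with h0 | hpos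
  · have hz : z = b := Subtype.ext (Path.eq_of_length_zero r h0)
    subst hz
    have hr : r = .nil := Path.eq_nil_of_length_zero r h0
    subst hr
    exact ⟨p, by simpa using hpr⟩
  · exact ⟨p.cons ⟨r, hpos, hint⟩, by rw [composePrim_cons]; exact hpr⟩

lemma composePrim_inj {C0 : Set Q} {a : ↥C0} :
    ∀ {b : ↥C0} (p q : Path a b), composePrim p = composePrim q → p = q := by
  intro b p
  induction p with
  | nil =>
    intro q h
    cases q with
    | nil => rfl
    | cons q' f =>
      exfalso
      have := congrArg Path.length h
      simp at this
      have := f.2.1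
      omega
  | @cons z b p' e ih =>
    intro q h
    cases q with
    | nil =>
      exfalso
      have := congrArg Path.length h
      simp at this
      have := e.2.1
      omega
    | @cons z' b q' f =>
      rw [composePrim_cons, composePrim_cons] at h
      have key : ∀ {zz zz' : ↥C0} (uu : Path (zz:Q) (b:Q)) (vv : Path (zz':Q) (b:Q))
          (ss : Path (a:Q) (zz:Q)) (tt : Path (a:Q) (zz':Q)),
          0 < uu.length → IsPrimitive C0 vv → ss.comp uu = tt.comp vv → uu.length ≤ vv.length →
          zz = zz' := by
        intro zz zz' uu vv ss tt hu hv heq hlen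
        obtain ⟨m, hm1, hm2⟩ := comp_eq_comp_split uu vv ss tt heq hlen
        rcases Nat.eq_zero_or_pos m.length with h0 | hmpos
        · exact (Subtype.ext (Path.eq_of_length_zero m h0)).symm
        · exact absurd zz.2 (hv.2 _ m uu hm1 hmpos hu)
      have hzz : z = z' := by
        rcases le_total (e.1.length) (f.1.length) with hle | hle
        · exact key e.1 f.1 _ _ e.2.1 f.2 h hle
        · exact (key f.1 e.1 _ _ f.2.1 e.2 h.symm hle).symm
      subst hzz
      obtain ⟨m, hm1, hm2⟩ := comp_eq_comp_split e.1 f.1 (composePrim p') (composePrim q') h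
        (by
          by_contra hlt
          push_neg at hlt
          obtain ⟨m, hm1, hm2⟩ := comp_eq_comp_split f.1 e.1 (composePrim q') (composePrim p')
            h.symm hlt.le
          have hmpos : 0 < m.length := by
            have := congrArg Path.length hm1; simp at this; omega
          exact absurd z.2 (e.2.2 _ m f.1 hm1 hmpos f.2.1))
      have hm0 : m.length = 0 := by
        rcases Nat.eq_zero_or_pos m.length with h0 | hmpos
        · exact h0
        · exact absurd z.2 (f.2.2 _ m e.1 hm1 hmpos e.2.1)
      have hm : m = .nil := Path.eq_nil_of_length_zero m hm0
      subst hm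
      simp only [Path.nil_comp, Path.comp_nil] at hm1 hm2
      have hef : e = f := Subtype.ext hm1.symm
      subst hef
      rw [ih q' hm2]

lemma composePrim_comp' {C0 : Set Q} (a b c : ↥C0) (p : Path a b) (q : Path b c) :
    composePrim (p.comp q) = (composePrim p).comp (composePrim q) := by
  induction q with
  | nil => simp
  | cons q' f ih =>
    rw [Path.comp_cons, composePrim_cons, composePrim_cons, ih, Path.comp_assoc]

end

/-- The full subcategory of the free category on `Q` with objects `C₀` is isomorphic
to the free category on the quiver of primitive paths: concatenation is bijective on
morphism spaces (unique factorization into primitive paths) and functorial. -/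
theorem full_subcategory_of_free_category_is_free
    {Q : Type} [Quiver.{1} Q] (C0 : Set Q) :
    (∀ a b : ↥C0,
      Function.Bijective (composePrim : Path a b → Path (a : Q) (b : Q))) ∧
    (∀ (a b c : ↥C0) (p : Path a b) (q : Path b c),
      composePrim (p.comp q) = (composePrim p).comp (composePrim q)) := by
  refine ⟨fun a b => ⟨fun p q h => composePrim_inj p q h, fun w => composePrim_surj a b w⟩, ?_⟩
  exact composePrim_comp'
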